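/- arXiv:2110.10362 — 2 statements merged into one kernel-verified Lean document; each statement's English description precedes it below -/
import Mathlib

section
/- Let $w : [0,\infty) \to [0,\infty)$ be absolutely continuous and satisfy $w'(t) \le (b - \mu \chi_{R(t)}(x_0)) w(t)$ pointwise, where $R(t)$ is the sweeping arc of the previous setup (width $\delta$, speed $c$, period $P = L/c$ on the circle of circumference $L$), $x_0$ is any fixed point, and $b, \mu > 0$. If $\mu \delta / L > b$, then $w(nP) \le w(0) \exp\big(-(\mu \delta/c - bP)n\big)$ for all $n \in \mathbb{N}$, and hence $w(t) \to 0$ as $t \to \infty$. -/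
/-!
The point `x₀` is covered by the arc exactly when `c t` lies within `δ / 2` of `x₀` on the
circle, i.e. for `t` within `r = δ / (2c)` of the hitting times `m + kP`. Grönwall gives growth
at rate at most `b` everywhere and at rate at most `b - μ` while `x₀` is covered. Every window
`[a, a + P]` contains covered time `2r = δ / c` (one whole covering interval, or one split by
the ends of the window), so `w (a + P) ≤ w a * exp (bP - μδ/c)`. Iterating over the periods
gives the geometric bound, and growth at rate at most `b` inside a period gives `w → 0`.
-/

open Real Set Filter Topology

theorem le_mul_exp_of_deriv_le_mul {w : ℝ → ℝ} {K s t : ℝ} (hst : s ≤ t)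
    (hdiff : ∀ u ∈ Icc s t, DifferentiableAt ℝ w u)
    (hbound : ∀ u ∈ Ico s t, deriv w u ≤ K * w u) :
    w t ≤ w s * exp (K * (t - s)) := by
  have h := le_gronwallBound_of_liminf_deriv_right_le (f' := deriv w) (δ := w s) (ε := 0)
    (fun u hu => (hdiff u hu).continuousAt.continuousWithinAt)
    (fun u hu _ hr =>
      (hdiff u (Ico_subset_Icc_self hu)).hasDerivAt.hasDerivWithinAt.liminf_right_slope_le hr)
    le_rfl (by simpa using hbound) t (right_mem_Icc.2 hst)
  rwa [gronwallBound_ε0] at h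

theorem le_mul_exp_add {w : ℝ → ℝ} {s t u A B : ℝ} (h₁ : w t ≤ w s * exp A)
    (h₂ : w u ≤ w t * exp B) : w u ≤ w s * exp (A + B) :=
  calc w u ≤ w s * exp A * exp B := h₂.trans (mul_le_mul_of_nonneg_right h₁ (exp_pos B).le)
    _ = w s * exp (A + B) := by rw [exp_add, mul_assoc]

theorem le_mul_exp_of_deriv_le_of_periodic_decay {w : ℝ → ℝ} {a P r m b μ : ℝ}
    (hr : 0 ≤ r) (hrP : 2 * r ≤ P) (hm : m ∈ Ico (a + r) (a + r + P))
    (hdiff : ∀ u ∈ Icc a (a + P), DifferentiableAt ℝ w u)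
    (hgrow : ∀ u ∈ Icc a (a + P), deriv w u ≤ b * w u)
    (hdecay : ∀ u ∈ Icc a (a + P), ∀ k : ℤ, |u - (m + k * P)| ≤ r →
      deriv w u ≤ (b - μ) * w u) :
    w (a + P) ≤ w a * exp (b * P - 2 * μ * r) := by
  obtain ⟨hm₁, hm₂⟩ := hm
  have piece : ∀ {s t K : ℝ}, a ≤ s → s ≤ t → t ≤ a + P →
      (∀ u ∈ Icc s t, deriv w u ≤ K * w u) → w t ≤ w s * exp (K * (t - s)) :=
    fun has hst hta hK => le_mul_exp_of_deriv_le_mul hst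
      (fun u hu => hdiff u ⟨has.trans hu.1, hu.2.trans hta⟩)
      (fun u hu => hK u (Ico_subset_Icc_self hu))
  have decay : ∀ {s t : ℝ} (k : ℤ), a ≤ s → s ≤ t → t ≤ a + P →
      m + k * P - r ≤ s → t ≤ m + k * P + r → w t ≤ w s * exp ((b - μ) * (t - s)) :=
    fun k has hst hta hs ht => piece has hst hta fun u hu =>
      hdecay u ⟨has.trans hu.1, hu.2.trans hta⟩ k
        (abs_le.2 ⟨by linarith [hu.1], by linarith [hu.2]⟩)
  have grow : ∀ {s t : ℝ}, a ≤ s → s ≤ t → t ≤ a + P → w t ≤ w s * exp (b * (t - s)) :=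
    fun has hst hta => piece has hst hta fun u hu => hgrow u ⟨has.trans hu.1, hu.2.trans hta⟩
  by_cases hinside : m + r ≤ a + P
  · have h := le_mul_exp_add (le_mul_exp_add
      (grow le_rfl (by linarith) (by linarith) : w (m - r) ≤ _)
      (decay (s := m - r) (t := m + r) 0 (by linarith) (by linarith) hinside (by simp) (by simp)))
      (grow (by linarith) hinside le_rfl)
    convert h using 3
    ring
  · -- the covering interval around `m - P` overlaps the left end of the window
    have h := le_mul_exp_add (le_mul_exp_add
      (decay (s := a) (t := m - P + r) (-1) le_rfl (by linarith) (by linarith)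
        (by push_cast; linarith) (by push_cast; linarith))
      (grow (by linarith) (by linarith) (by linarith) : w (m - r) ≤ _))
      (decay (t := a + P) 0 (by linarith) (by linarith) le_rfl (by simp) (by push_cast; linarith))
    convert h using 3
    ring

theorem AddCircle.exists_coe_eq_mem_Ico {𝕜 : Type*} [AddCommGroup 𝕜] [LinearOrder 𝕜]
    [IsOrderedAddMonoid 𝕜] [Archimedean 𝕜] {p : 𝕜} (hp : 0 < p) (x : AddCircle p) (a : 𝕜) :
    ∃ y ∈ Ico a (a + p), (y : AddCircle p) = x := by
  obtain ⟨y, rfl⟩ := QuotientAddGroup.mk_surjective x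
  refine ⟨toIcoMod hp a y, toIcoMod_mem_Ico hp a y, ?_⟩
  rw [QuotientAddGroup.eq_iff_sub_mem, toIcoMod_sub_self]
  exact AddSubgroup.zsmul_mem_zmultiples p _

theorem AddCircle.dist_coe_le_abs_sub {p : ℝ} (x y : ℝ) :
    dist (x : AddCircle p) (y : AddCircle p) ≤ |x - y| := by
  rw [dist_eq_norm, ← AddCircle.coe_sub]
  exact QuotientAddGroup.norm_mk_le_norm

theorem le_mul_exp_of_deriv_le_of_sweep_decay {L c δ b μ a : ℝ} {x₀ : AddCircle L} {w : ℝ → ℝ}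
    (hL : 0 < L) (hc : 0 < c) (hδ : 0 < δ) (hδL : δ ≤ L) (ha : 0 ≤ a)
    (hdiff : ∀ t ≥ (0:ℝ), DifferentiableAt ℝ w t)
    (hgrow : ∀ t ≥ (0:ℝ), deriv w t ≤ b * w t)
    (hdecay : ∀ t ≥ (0:ℝ), dist x₀ ((c * t : ℝ) : AddCircle L) ≤ δ / 2 →
      deriv w t ≤ (b - μ) * w t) :
    w (a + L / c) ≤ w a * exp (b * (L / c) - μ * δ / c) := by
  set P := L / c
  set r := δ / (2 * c) with hr
  have hcP : c * P = L := mul_div_cancel₀ L hc.ne'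
  have hcr : c * r = δ / 2 := by rw [hr]; field_simp
  have h2r : 2 * r = δ / c := by rw [hr]; field_simp
  obtain ⟨y, ⟨hy₁, hy₂⟩, rfl⟩ := AddCircle.exists_coe_eq_mem_Ico hL x₀ (c * (a + r))
  have hm : y / c ∈ Ico (a + r) (a + r + P) :=
    ⟨(le_div_iff₀' hc).2 hy₁, (div_lt_iff₀' hc).2 (by linarith [mul_add c (a + r) P])⟩
  have h := le_mul_exp_of_deriv_le_of_periodic_decay (by positivity)
    (h2r ▸ div_le_div_of_nonneg_right hδL hc.le) hm
    (fun u hu => hdiff u (ha.trans hu.1)) (fun u hu => hgrow u (ha.trans hu.1))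
    fun u hu k hk => hdecay u (ha.trans hu.1) <| by
      have hy : c * (y / c + k * P) = y + k • L := by
        rw [mul_add, mul_div_cancel₀ y hc.ne', zsmul_eq_mul, ← hcP]; ring
      calc dist ((y : ℝ) : AddCircle L) ((c * u : ℝ) : AddCircle L)
          = dist ((c * (y / c + k * P) : ℝ) : AddCircle L) ((c * u : ℝ) : AddCircle L) := by
            rw [hy, AddCircle.coe_add, AddCircle.coe_zsmul, AddCircle.coe_period, smul_zero,
              add_zero]
        _ ≤ |c * (y / c + k * P) - c * u| := AddCircle.dist_coe_le_abs_sub _ _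
        _ = c * |u - (y / c + k * P)| := by rw [← mul_sub, abs_mul, abs_of_pos hc, abs_sub_comm]
        _ ≤ c * r := by gcongr
        _ = δ / 2 := hcr
  rwa [mul_assoc 2, mul_left_comm, h2r, ← mul_div_assoc μ] at h

theorem le_mul_exp_nat_mul_of_le_mul_exp {w : ℝ → ℝ} {P A : ℝ}
    (hstep : ∀ n : ℕ, w (n * P + P) ≤ w (n * P) * exp A) (n : ℕ) :
    w (n * P) ≤ w 0 * exp (A * n) := by
  induction n with
  | zero => simp
  | succ n ih =>
    have h := le_mul_exp_add ih (hstep n)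
    push_cast
    rwa [← add_one_mul, ← mul_add_one] at h

theorem tendsto_zero_of_le_mul_exp_nat_mul {w : ℝ → ℝ} {P A B : ℝ} (hP : 0 < P) (hA : A < 0)
    (hB : 0 ≤ B) (hw : ∀ t, 0 ≤ w t) (hdecay : ∀ n : ℕ, w (n * P) ≤ w 0 * exp (A * n))
    (hbetween : ∀ s ≥ (0:ℝ), ∀ t ∈ Icc s (s + P), w t ≤ w s * B) :
    Tendsto w atTop (𝓝 0) := by
  have hbound : ∀ t ≥ (0:ℝ), w t ≤ w 0 * B * exp A ^ ⌊t / P⌋₊ := by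
    intro t ht
    set n := ⌊t / P⌋₊
    have hn : t ∈ Icc (n * P) (n * P + P) :=
      ⟨(le_div_iff₀ hP).1 (Nat.floor_le (by positivity)),
        by rw [← add_one_mul]; exact ((div_lt_iff₀ hP).1 (Nat.lt_floor_add_one _)).le⟩
    calc w t ≤ w (n * P) * B := hbetween _ (by positivity) t hn
      _ ≤ w 0 * exp (A * n) * B := mul_le_mul_of_nonneg_right (hdecay n) hB
      _ = w 0 * B * exp A ^ n := by rw [mul_comm A, exp_nat_mul]; ring
  have hfloor : Tendsto (fun t : ℝ => ⌊t / P⌋₊) atTop atTop :=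
    tendsto_nat_floor_atTop.comp (tendsto_id.atTop_div_const hP)
  have hpow := (tendsto_pow_atTop_nhds_zero_of_lt_one (exp_pos A).le
    (exp_lt_one_iff.2 hA)).comp hfloor |>.const_mul (w 0 * B)
  rw [mul_zero] at hpow
  exact squeeze_zero' (Eventually.of_forall hw) ((eventually_ge_atTop 0).mono hbound) hpow

theorem thin_sweeps_convergence_general
    (L c δ b μ : ℝ) (hL : 0 < L) (hc : 0 < c) (hδ : 0 < δ)
    (hδL : δ ≤ L) (hb : 0 < b) (hμ : 0 < μ) (hrate : b < μ * δ / L)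
    (x₀ : AddCircle L)
    (w : ℝ → ℝ) (hwpos : ∀ t, 0 ≤ w t)
    (hwdiff : ∀ t ≥ (0:ℝ), DifferentiableAt ℝ w t)
    (hw : ∀ t ≥ (0:ℝ), deriv w t ≤
      (b - μ * (if dist x₀ ((c * t : ℝ) : AddCircle L) ≤ δ / 2 then (1:ℝ) else 0))
        * w t) :
    (∀ n : ℕ, w (n * (L / c)) ≤
        w 0 * Real.exp (-(μ * δ / c - b * (L / c)) * n)) ∧
      Filter.Tendsto w Filter.atTop (nhds 0) := by
  have hgrow : ∀ t ≥ (0:ℝ), deriv w t ≤ b * w t := fun t ht => (hw t ht).trans <| by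
    split_ifs <;> nlinarith [hwpos t]
  have hdecay : ∀ t ≥ (0:ℝ), dist x₀ ((c * t : ℝ) : AddCircle L) ≤ δ / 2 →
      deriv w t ≤ (b - μ) * w t := fun t ht hx => by simpa [hx] using hw t ht
  have hperiod : ∀ n : ℕ, w (n * (L / c)) ≤ w 0 * exp (-(μ * δ / c - b * (L / c)) * n) :=
    le_mul_exp_nat_mul_of_le_mul_exp fun n => by
      rw [neg_sub]
      exact le_mul_exp_of_deriv_le_of_sweep_decay hL hc hδ hδL (by positivity) hwdiff hgrow hdecay
  have hexponent : -(μ * δ / c - b * (L / c)) < 0 := by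
    rw [lt_div_iff₀ hL] at hrate
    rw [neg_lt_zero, sub_pos, mul_div_assoc', div_lt_div_iff_of_pos_right hc]
    exact hrate
  have hbetween : ∀ s ≥ (0:ℝ), ∀ t ∈ Icc s (s + L / c), w t ≤ w s * exp (b * (L / c)) :=
    fun s hs t ht => calc
      w t ≤ w s * exp (b * (t - s)) := le_mul_exp_of_deriv_le_mul ht.1
          (fun u hu => hwdiff u (hs.trans hu.1)) fun u hu => hgrow u (hs.trans hu.1)
      _ ≤ w s * exp (b * (L / c)) := mul_le_mul_of_nonneg_left
          (exp_le_exp.2 (mul_le_mul_of_nonneg_left (by linarith [ht.2]) hb.le)) (hwpos s)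
  exact ⟨hperiod, tendsto_zero_of_le_mul_exp_nat_mul (div_pos hL hc) hexponent (exp_pos _).le hwpos
    hperiod hbetween⟩

/-- Thin-sweeps convergence: an error satisfying
`w' ≤ (b - μ χ_{R(t)}(x₀)) w` for the sweeping arc `R(t)` of width `δ` and
speed `c` on the circle of circumference `L` decays geometrically along
sweep periods `P = L/c` when `μ δ / L > b`, hence `w(t) → 0`. -/
theorem thin_sweeps_convergence
    (L c δ b μ : ℝ) (hL : 0 < L) [Fact (0 < L)] (hc : 0 < c) (hδ : 0 < δ)
    (hδL : δ ≤ L) (hb : 0 < b) (hμ : 0 < μ) (hrate : b < μ * δ / L)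
    (x₀ : AddCircle L)
    (w : ℝ → ℝ) (hwpos : ∀ t, 0 ≤ w t)
    (hwdiff : ∀ t ≥ (0:ℝ), DifferentiableAt ℝ w t)
    (hw : ∀ t ≥ (0:ℝ), deriv w t ≤
      (b - μ * (if dist x₀ ((c * t : ℝ) : AddCircle L) ≤ δ / 2 then (1:ℝ) else 0))
        * w t) :
    (∀ n : ℕ, w (n * (L / c)) ≤
        w 0 * Real.exp (-(μ * δ / c - b * (L / c)) * n)) ∧
      Filter.Tendsto w Filter.atTop (nhds 0) :=
  thin_sweeps_convergence_general L c δ b μ hL hc hδ hδL hb hμ hrate x₀ w hwpos hwdiff hw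
end

section
/- Let $A$ be a positive self-adjoint operator on a Hilbert space $H$ with $\langle A w, w \rangle \ge \lambda_1 \|w\|^2$ for all $w$ in its domain (Poincaré inequality), and suppose $w : [0,\infty) \to H$ satisfies the differential inequality $\frac{d}{dt}\tfrac12\|w\|^2 + \nu \langle A w, w\rangle + \mu \|w\|^2 \le \mu \|w - I_h w\| \|w\|$, where $\|w - I_h w\| \le c_0 h \langle A w, w \rangle^{1/2}$. If $\mu c_0^2 h^2 \le \nu$, then $\|w(t)\|^2 \le \|w(0)\|^2 e^{-\mu t}$ for all $t \ge 0$. -/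
/-!
Young's inequality splits the interpolation term `μ ‖w - I_h w‖ ‖w‖` into two halves: one is
absorbed by the dissipation `ν ⟪A w, w⟫` (this is where `μ c₀² h² ≤ ν` enters), the other by the
nudging term `μ ‖w‖²`. What remains is `d/dt (½ ‖w‖²) + μ (½ ‖w‖²) ≤ 0`, and Grönwall's
inequality gives the exponential decay.
-/

open scoped RealInnerProductSpace
open Real

theorem le_mul_exp_neg_of_deriv_add_mul_nonpos {f : ℝ → ℝ} {μ : ℝ}
    (hf : ∀ t ≥ 0, DifferentiableAt ℝ f t) (hdecay : ∀ t ≥ 0, deriv f t + μ * f t ≤ 0) :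
    ∀ t ≥ 0, f t ≤ f 0 * exp (-μ * t) := by
  intro t ht
  have hbound := le_gronwallBound_of_liminf_deriv_right_le (f' := deriv f) (K := -μ) (ε := 0)
    (a := 0) (b := t)
    (fun x hx => (hf x hx.1).continuousAt.continuousWithinAt)
    (fun x hx r hr => by
      simpa only [slope, vsub_eq_sub, smul_eq_mul] using
        (hf x hx.1).hasDerivAt.hasDerivWithinAt.liminf_right_slope_le hr)
    le_rfl (fun x hx => by linarith [hdecay x hx.1]) t ⟨ht, le_rfl⟩
  simpa only [gronwallBound_ε0, sub_zero] using hbound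

theorem two_mul_add_mul_sq_nonpos_of_energy_le {ν μ c a e n d : ℝ} (hμ : 0 ≤ μ) (ha : 0 ≤ a)
    (hn : 0 ≤ n) (he : e ≤ c * √a) (hc : μ * c ^ 2 ≤ ν)
    (henergy : d + ν * a + μ * n ^ 2 ≤ μ * e * n) :
    2 * d + μ * n ^ 2 ≤ 0 := by
  have young : 2 * (c * √a) * n ≤ c ^ 2 * a + n ^ 2 := by
    simpa only [mul_pow, sq_sqrt ha] using two_mul_le_add_sq (c * √a) n
  have hdiss : μ * c ^ 2 * a ≤ ν * a := mul_le_mul_of_nonneg_right hc ha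
  have hinterp : μ * e * n ≤ μ * (c * √a) * n := by gcongr
  have hyoung := mul_le_mul_of_nonneg_left young hμ
  have hdiss_nonneg : 0 ≤ μ * c ^ 2 * a := by positivity
  linarith

theorem aot_abstract_convergence_general
    {H : Type*} [NormedAddCommGroup H] [InnerProductSpace ℝ H]
    (A Ih : H →ₗ[ℝ] H)
    (lam₁ : ℝ) (hlam₁ : 0 < lam₁)
    (hApos : ∀ x : H, lam₁ * ‖x‖ ^ 2 ≤ ⟪A x, x⟫)
    (ν μ c₀ h : ℝ) (hμ : 0 < μ)
    (happrox : ∀ x : H, ‖x - Ih x‖ ≤ c₀ * h * Real.sqrt ⟪A x, x⟫)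
    (hcond : μ * c₀ ^ 2 * h ^ 2 ≤ ν)
    (w : ℝ → H)
    (hwdiff : ∀ t ≥ (0:ℝ),
      DifferentiableAt ℝ (fun s => (1/2 : ℝ) * ‖w s‖ ^ 2) t)
    (hineq : ∀ t ≥ (0:ℝ),
      deriv (fun s => (1/2 : ℝ) * ‖w s‖ ^ 2) t
          + ν * ⟪A (w t), w t⟫ + μ * ‖w t‖ ^ 2
        ≤ μ * ‖w t - Ih (w t)‖ * ‖w t‖) :
    ∀ t ≥ (0:ℝ), ‖w t‖ ^ 2 ≤ ‖w 0‖ ^ 2 * Real.exp (-μ * t) := by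
  have hdecay : ∀ t ≥ (0:ℝ),
      deriv (fun s => (1/2 : ℝ) * ‖w s‖ ^ 2) t + μ * ((1/2 : ℝ) * ‖w t‖ ^ 2) ≤ 0 := by
    intro t ht
    have hA : 0 ≤ ⟪A (w t), w t⟫ := (by positivity : 0 ≤ lam₁ * ‖w t‖ ^ 2).trans (hApos _)
    have hsplit := two_mul_add_mul_sq_nonpos_of_energy_le hμ.le hA (norm_nonneg _) (happrox _)
      (by rwa [mul_pow, ← mul_assoc]) (hineq t ht)
    linarith
  intro t ht
  have hhalf := le_mul_exp_neg_of_deriv_add_mul_nonpos hwdiff hdecay t ht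
  linarith

/-- Abstract core of the AOT convergence proof: the error energy inequality
with dissipation `ν⟪Aw,w⟫`, nudging `μ‖w‖²`, and interpolation defect bounded
by `c₀ h ⟪Aw,w⟫^{1/2}` gives `‖w(t)‖² ≤ ‖w(0)‖² e^{-μt}` when `μc₀²h² ≤ ν`. -/
theorem aot_abstract_convergence
    {H : Type*} [NormedAddCommGroup H] [InnerProductSpace ℝ H]
    (A Ih : H →ₗ[ℝ] H)
    (hAsym : ∀ x y : H, ⟪A x, y⟫ = ⟪x, A y⟫)
    (lam₁ : ℝ) (hlam₁ : 0 < lam₁)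
    (hApos : ∀ x : H, lam₁ * ‖x‖ ^ 2 ≤ ⟪A x, x⟫)
    (ν μ c₀ h : ℝ) (hν : 0 < ν) (hμ : 0 < μ) (hc₀ : 0 ≤ c₀) (hh : 0 ≤ h)
    (happrox : ∀ x : H, ‖x - Ih x‖ ≤ c₀ * h * Real.sqrt ⟪A x, x⟫)
    (hcond : μ * c₀ ^ 2 * h ^ 2 ≤ ν)
    (w : ℝ → H)
    (hwdiff : ∀ t ≥ (0:ℝ),
      DifferentiableAt ℝ (fun s => (1/2 : ℝ) * ‖w s‖ ^ 2) t)
    (hineq : ∀ t ≥ (0:ℝ),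
      deriv (fun s => (1/2 : ℝ) * ‖w s‖ ^ 2) t
          + ν * ⟪A (w t), w t⟫ + μ * ‖w t‖ ^ 2
        ≤ μ * ‖w t - Ih (w t)‖ * ‖w t‖) :
    ∀ t ≥ (0:ℝ), ‖w t‖ ^ 2 ≤ ‖w 0‖ ^ 2 * Real.exp (-μ * t) :=
  aot_abstract_convergence_general A Ih lam₁ hlam₁ hApos ν μ c₀ h hμ happrox hcond w hwdiff hineq
end
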